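/- Let Γ be a connected signed graph, uv a non-pendant edge not lying on any triangle, with σ(uv) = +1, and let x be a unit eigenvector for the index λ(Γ). Let Γ' = α(Γ, uv) be obtained by deleting all edges from v to its neighbors other than u and joining those neighbors to u instead (keeping signs). If x_v ≤ x_u ≤ λ(Γ)·x_v, then λ(Γ') ≥ λ(Γ); if the inequalities are strict (x_v < x_u < λ(Γ)·x_v), then λ(Γ') > λ(Γ). -/

import Mathlib

structure SignedGraph (n : ℕ) where
  sign : Fin n → Fin n → ℝ
  symm : ∀ i j, sign i j = sign j i
  loopless : ∀ i, sign i i = 0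
  vals : ∀ i j, sign i j = 0 ∨ sign i j = 1 ∨ sign i j = -1

/-- The adjacency matrix of a signed graph. -/
def SignedGraph.adj {n : ℕ} (Γ : SignedGraph n) : Matrix (Fin n) (Fin n) ℝ :=
  Matrix.of Γ.sign

/-- The underlying simple graph of a signed graph. -/
def SignedGraph.graph {n : ℕ} (Γ : SignedGraph n) : SimpleGraph (Fin n) where
  Adj i j := Γ.sign i j ≠ 0
  symm := ⟨by intro i j h; show Γ.sign j i ≠ 0; rwa [Γ.symm j i]⟩
  loopless := ⟨by intro i h; exact h (Γ.loopless i)⟩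

/-- `lam` is the index (largest eigenvalue) of the signed graph `Γ`. -/
def SignedGraph.IsIndex {n : ℕ} (Γ : SignedGraph n) (lam : ℝ) : Prop :=
  (∃ y : Fin n → ℝ, y ≠ 0 ∧ Γ.adj.mulVec y = lam • y) ∧
  ∀ μ : ℝ, (∃ y : Fin n → ℝ, y ≠ 0 ∧ Γ.adj.mulVec y = μ • y) → μ ≤ lam

lemma rayleigh_le {n : ℕ} (Γ' : SignedGraph n) (lam' : ℝ) (h : Γ'.IsIndex lam')
    (x : Fin n → ℝ) (hx : ∑ i, x i ^ 2 = 1) :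
    dotProduct x (Γ'.adj.mulVec x) ≤ lam' := by
  have hA : Γ'.adj.IsHermitian := Matrix.ext fun i j => by
    simp [SignedGraph.adj, Matrix.conjTranspose_apply, Γ'.symm j i]
  set B : Matrix (Fin n) (Fin n) ℝ := lam' • (1 : Matrix (Fin n) (Fin n) ℝ) - Γ'.adj with hBdef
  have hB : B.IsHermitian := Matrix.ext fun i j => by
    simp only [hBdef, Matrix.conjTranspose_apply, Matrix.sub_apply, Matrix.smul_apply,
      Matrix.one_apply, star_trivial, SignedGraph.adj, Matrix.of_apply, Γ'.symm j i]
    rcases eq_or_ne i j with hij | hij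
    · subst hij; rfl
    · rw [if_neg hij, if_neg (Ne.symm hij)]
  have hpsd : B.PosSemidef := by
    apply hB.posSemidef_iff_eigenvalues_nonneg.mpr
    intro i; show (0:ℝ) ≤ hB.eigenvalues i
    set b : Fin n → ℝ := ⇑(hB.eigenvectorBasis i) with hbdef
    have hb0 : b ≠ 0 := fun h => hB.eigenvectorBasis.orthonormal.ne_zero i (WithLp.ofLp_injective 2 (by rw [WithLp.ofLp_zero]; exact h))
    have heigb : B.mulVec b = hB.eigenvalues i • b := hB.mulVec_eigenvectorBasis i
    have hAb : Γ'.adj.mulVec b = (lam' - hB.eigenvalues i) • b := by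
      have : B.mulVec b = lam' • b - Γ'.adj.mulVec b := by
        simp [hBdef, Matrix.sub_mulVec, Matrix.smul_mulVec, Matrix.one_mulVec]
      rw [this] at heigb
      rw [sub_smul]
      linear_combination (norm := module) - heigb
    have := h.2 (lam' - hB.eigenvalues i) ⟨b, hb0, hAb⟩
    linarith
  have h0 := hpsd.dotProduct_mulVec_nonneg x
  have hxx : dotProduct x x = 1 := by
    simpa [dotProduct, ← pow_two] using hx
  have : dotProduct x (B.mulVec x)
      = lam' - dotProduct x (Γ'.adj.mulVec x) := by
    rw [hBdef, Matrix.sub_mulVec, Matrix.smul_mulVec, Matrix.one_mulVec,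
      dotProduct_sub, dotProduct_smul, smul_eq_mul, hxx, mul_one]
  rw [show star x = x from star_trivial x, this] at h0
  linarith

/-- α-transform on a positive non-pendant edge `uv` lying on no triangle: if
`x_v ≤ x_u ≤ λ(Γ)·x_v` then `λ(Γ') ≥ λ(Γ)`; with strict inequalities, `λ(Γ') > λ(Γ)`. -/
theorem stmt_4 {n : ℕ} (Γ Γ' : SignedGraph n) (u v : Fin n) (huv : u ≠ v)
    (hconn : Γ.graph.Connected)
    (hedge : Γ.sign u v = 1)
    (hnonpendu : ∃ w, w ≠ v ∧ Γ.sign u w ≠ 0)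
    (hnonpendv : ∃ w, w ≠ u ∧ Γ.sign v w ≠ 0)
    (htri : ∀ w, Γ.sign u w = 0 ∨ Γ.sign v w = 0)
    (hmove : ∀ w, w ≠ u → w ≠ v →
      Γ'.sign u w = Γ.sign u w + Γ.sign v w ∧ Γ'.sign v w = 0)
    (huv' : Γ'.sign u v = Γ.sign u v)
    (hsame : ∀ i j, i ≠ u → i ≠ v → j ≠ u → j ≠ v → Γ'.sign i j = Γ.sign i j)
    (lam : ℝ) (hlam : Γ.IsIndex lam)
    (x : Fin n → ℝ) (hunit : ∑ i, x i ^ 2 = 1) (heig : Γ.adj.mulVec x = lam • x) :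
    ∀ lam' : ℝ, Γ'.IsIndex lam' →
      ((x v ≤ x u ∧ x u ≤ lam * x v) → lam ≤ lam') ∧
      ((x v < x u ∧ x u < lam * x v) → lam < lam') := by
  intro lam' hlam'
  -- row equation
  have hrow : ∀ i, ∑ j, Γ.sign i j * x j = lam * x i := by
    intro i
    have := congrFun heig i
    simpa [Matrix.mulVec, dotProduct, SignedGraph.adj] using this
  -- splitting lemma
  have split : ∀ f : Fin n → ℝ,
      ∑ j, f j = f u + f v + ∑ j ∈ Finset.univ \ {u, v}, f j := by
    intro f
    rw [← Finset.sum_sdiff (Finset.subset_univ ({u, v} : Finset (Fin n))),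
      Finset.sum_pair huv]
    ring
  set K : ℝ := lam * x v - x u with hKdef
  set T : Finset (Fin n) := Finset.univ \ {u, v} with hTdef
  have memT : ∀ j ∈ T, j ≠ u ∧ j ≠ v := by
    intro j hj
    simp [hTdef, Finset.mem_sdiff, Finset.mem_insert] at hj
    exact hj
  have hS : ∑ j ∈ T, Γ.sign v j * x j = K := by
    have h1 := split (fun j => Γ.sign v j * x j)
    rw [hrow v] at h1
    rw [Γ.loopless v, Γ.symm v u, hedge] at h1
    simp at h1
    rw [hKdef]
    linarith
  -- the key difference identity
  have key : ∑ i, x i * (∑ j, (Γ'.sign i j - Γ.sign i j) * x j)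
      = 2 * ((x u - x v) * K) := by
    have gu : ∑ j, (Γ'.sign u j - Γ.sign u j) * x j = K := by
      rw [split (fun j => (Γ'.sign u j - Γ.sign u j) * x j)]
      rw [Γ'.loopless u, Γ.loopless u, huv']
      have : ∑ j ∈ T, (Γ'.sign u j - Γ.sign u j) * x j
          = ∑ j ∈ T, Γ.sign v j * x j := by
        apply Finset.sum_congr rfl
        intro j hj
        obtain ⟨hju, hjv⟩ := memT j hj
        rw [(hmove j hju hjv).1]; ring
      rw [this, hS]; ring
    have gv : ∑ j, (Γ'.sign v j - Γ.sign v j) * x j = -K := by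
      rw [split (fun j => (Γ'.sign v j - Γ.sign v j) * x j)]
      have hvu : Γ'.sign v u = Γ.sign v u := by
        rw [Γ'.symm v u, Γ.symm v u, huv']
      rw [Γ'.loopless v, Γ.loopless v, hvu]
      have : ∑ j ∈ T, (Γ'.sign v j - Γ.sign v j) * x j
          = ∑ j ∈ T, -(Γ.sign v j * x j) := by
        apply Finset.sum_congr rfl
        intro j hj
        obtain ⟨hju, hjv⟩ := memT j hj
        rw [(hmove j hju hjv).2]; ring
      rw [this, Finset.sum_neg_distrib, hS]; ring
    rw [split (fun i => x i * (∑ j, (Γ'.sign i j - Γ.sign i j) * x j))]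
    rw [gu, gv]
    have hrest : ∑ i ∈ T, x i * (∑ j, (Γ'.sign i j - Γ.sign i j) * x j)
        = (x u - x v) * K := by
      have h1 : ∀ i ∈ T, x i * (∑ j, (Γ'.sign i j - Γ.sign i j) * x j)
          = (Γ.sign v i * x i) * (x u - x v) := by
        intro i hi
        obtain ⟨hiu, hiv⟩ := memT i hi
        have giu : Γ'.sign i u - Γ.sign i u = Γ.sign v i := by
          rw [Γ'.symm i u, Γ.symm i u, (hmove i hiu hiv).1]
          rw [Γ.symm v i]; ring
        have giv : Γ'.sign i v - Γ.sign i v = -Γ.sign v i := by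
          rw [Γ'.symm i v, Γ.symm i v, (hmove i hiu hiv).2]; ring
        rw [split (fun j => (Γ'.sign i j - Γ.sign i j) * x j)]
        rw [giu, giv]
        have : ∑ j ∈ T, (Γ'.sign i j - Γ.sign i j) * x j = 0 := by
          apply Finset.sum_eq_zero
          intro j hj
          obtain ⟨hju, hjv⟩ := memT j hj
          rw [hsame i j hiu hiv hju hjv]; ring
        rw [this]; ring
      rw [Finset.sum_congr rfl h1, ← Finset.sum_mul]
      have : ∑ i ∈ T, Γ.sign v i * x i = K := hS
      rw [this]; ring
    rw [hrest]; ring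
  -- quadratic form of Γ'
  have hform : dotProduct x (Γ'.adj.mulVec x)
      = lam + 2 * ((x u - x v) * K) := by
    have expand : dotProduct x (Γ'.adj.mulVec x)
        = ∑ i, x i * (∑ j, Γ.sign i j * x j)
          + ∑ i, x i * (∑ j, (Γ'.sign i j - Γ.sign i j) * x j) := by
      simp only [dotProduct, Matrix.mulVec, SignedGraph.adj, Matrix.of_apply]
      rw [← Finset.sum_add_distrib]
      apply Finset.sum_congr rfl
      intro i _
      rw [← mul_add, ← Finset.sum_add_distrib]
      congr 1
      apply Finset.sum_congr rfl
      intro j _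
      ring
    rw [expand, key]
    congr 1
    have : ∀ i, x i * (∑ j, Γ.sign i j * x j) = lam * x i ^ 2 := by
      intro i; rw [hrow i]; ring
    rw [Finset.sum_congr rfl (fun i _ => this i), ← Finset.mul_sum, hunit, mul_one]
  have hray := rayleigh_le Γ' lam' hlam' x hunit
  rw [hform] at hray
  constructor
  · rintro ⟨h1, h2⟩
    nlinarith [mul_nonneg (sub_nonneg.mpr h1) (sub_nonneg.mpr h2)]
  · rintro ⟨h1, h2⟩
    nlinarith [mul_pos (sub_pos.mpr h1) (sub_pos.mpr h2)]
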